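/- Under the NAG iteration with L-smooth convex f, 0 < s ≤ 1/L and r ≥ 2, the Lyapunov difference satisfies E(k+1) - E(k) ≤ -(s²k(k+r)/2)‖∇f(y_{k-1})‖² - s[(r-2)k + r² - r - 1](f(y_k) - f(x*)), where E(k) = s·k·(k+r)(f(y_{k-1}) - f(x*)) + (1/2)‖√s·k·v_{k-1} + r(y_k - x*) + s·k·∇f(y_{k-1})‖². -/

import Mathlib

/-!
For a convex function with `L`-Lipschitz gradient and `0 < s ≤ 1 / L`, convexity at the point
reached from `w` by a gradient step of length `1 / L`, together with the descent lemma, gives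
`f z + ⟪∇f z, w - z⟫ + s / 2 * ‖∇f w - ∇f z‖² ≤ f w`.
The NAG recursion turns the vector inside the norm of `E(k+1)` into the one of `E(k)` minus
`s (k + r) ∇f(y_k)`. Expanding the square and applying the inequality above to the pairs
`(y_k, y_{k-1})` and `(y_k, x*)`, with weights `s (k + r) k` and `s (k + r) r`, gives the bound:
the `‖∇f(y_k)‖²` terms cancel exactly and `f(y_{k-1})` drops out.
-/

open AffineMap InnerProductSpace
open scoped RealInnerProductSpace

section Smooth

variable {E : Type*} [NormedAddCommGroup E] [InnerProductSpace ℝ E] [CompleteSpace E]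
  {f : E → ℝ} {g : E → E} {g' z w : E}

theorem HasGradientAt.hasDerivAt_comp_lineMap {t : ℝ} (hf : HasGradientAt f g' (lineMap z w t)) :
    HasDerivAt (fun t ↦ f (lineMap z w t)) ⟪g', w - z⟫ t := by
  have h := (hasGradientAt_iff_hasFDerivAt.mp hf).comp_hasDerivAt t
    (hasDerivAt_lineMap (a := z) (b := w))
  simp only [toDual_apply_apply] at h
  exact h

theorem IsLocalMin.hasGradientAt_eq_zero (h : IsLocalMin f z) (hf : HasGradientAt f g' z) :
    g' = 0 := by
  simpa using h.hasFDerivAt_eq_zero (hasGradientAt_iff_hasFDerivAt.mp hf)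

theorem ConvexOn.add_inner_le (hconv : ConvexOn ℝ Set.univ f) (hf : HasGradientAt f g' z) (w : E) :
    f z + ⟪g', w - z⟫ ≤ f w := by
  have hline : ConvexOn ℝ Set.univ (fun t : ℝ ↦ f (lineMap z w t)) := by
    have h := hconv.comp_affineMap (lineMap z w : ℝ →ᵃ[ℝ] E)
    rw [Set.preimage_univ] at h
    exact h
  have := hline.le_slope_of_hasDerivAt (Set.mem_univ 0) (Set.mem_univ 1) zero_lt_one
    (HasGradientAt.hasDerivAt_comp_lineMap (by rwa [lineMap_apply_zero]))
  simp only [slope_def_field, lineMap_apply_one, lineMap_apply_zero, sub_zero, div_one] at this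
  linarith

theorem le_add_inner_add_of_lipschitz_gradient {L : ℝ} (hgrad : ∀ z, HasGradientAt f (g z) z)
    (hlip : ∀ z w, ‖g z - g w‖ ≤ L * ‖z - w‖) (z w : E) :
    f w ≤ f z + ⟪g z, w - z⟫ + L / 2 * ‖w - z‖ ^ 2 := by
  set ψ : ℝ → ℝ := fun t ↦ f (lineMap z w t) - t * ⟪g z, w - z⟫ - L / 2 * t ^ 2 * ‖w - z‖ ^ 2
  set ψ' : ℝ → ℝ := fun t ↦ ⟪g (lineMap z w t), w - z⟫ - ⟪g z, w - z⟫ - L * t * ‖w - z‖ ^ 2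
  have hψ : ∀ t, HasDerivAt ψ (ψ' t) t := fun t ↦ by
    have h := ((hgrad (lineMap z w t)).hasDerivAt_comp_lineMap.sub
      ((hasDerivAt_id t).mul_const ⟪g z, w - z⟫)).sub
      (((hasDerivAt_pow 2 t).const_mul (L / 2)).mul_const (‖w - z‖ ^ 2))
    exact h.congr_deriv (by simp only [ψ']; push_cast; ring)
  have hψ'_nonpos : ∀ t ∈ interior (Set.Ici (0 : ℝ)), ψ' t ≤ 0 := by
    intro t ht
    rw [interior_Ici, Set.mem_Ioi] at ht
    have hdist : ‖g (lineMap z w t) - g z‖ ≤ L * (t * ‖w - z‖) := by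
      simpa [lineMap_apply_module', norm_smul, abs_of_pos ht] using hlip (lineMap z w t) z
    calc ψ' t = ⟪g (lineMap z w t) - g z, w - z⟫ - L * t * ‖w - z‖ ^ 2 := by
          simp only [ψ', inner_sub_left]
      _ ≤ ‖g (lineMap z w t) - g z‖ * ‖w - z‖ - L * t * ‖w - z‖ ^ 2 := by
          gcongr; exact real_inner_le_norm _ _
      _ ≤ L * (t * ‖w - z‖) * ‖w - z‖ - L * t * ‖w - z‖ ^ 2 := by gcongr
      _ = 0 := by ring
  have hanti : AntitoneOn ψ (Set.Ici 0) :=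
    antitoneOn_of_hasDerivWithinAt_nonpos (convex_Ici 0)
      (fun t _ ↦ (hψ t).continuousAt.continuousWithinAt)
      (fun t _ ↦ (hψ t).hasDerivWithinAt) hψ'_nonpos
  have h := hanti Set.self_mem_Ici (Set.mem_Ici.mpr zero_le_one) zero_le_one
  simp only [ψ, lineMap_apply_one, lineMap_apply_zero] at h
  linarith

theorem ConvexOn.add_inner_add_sq_le {L s : ℝ} (hL : 0 < L) (hsL : s ≤ 1 / L)
    (hconv : ConvexOn ℝ Set.univ f) (hgrad : ∀ z, HasGradientAt f (g z) z)
    (hlip : ∀ z w, ‖g z - g w‖ ≤ L * ‖z - w‖) (z w : E) :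
    f z + ⟪g z, w - z⟫ + s / 2 * ‖g w - g z‖ ^ 2 ≤ f w := by
  set Δ := g w - g z
  set u := w - L⁻¹ • Δ
  have hlower := hconv.add_inner_le (hgrad z) u
  have hupper := le_add_inner_add_of_lipschitz_gradient hgrad hlip w u
  have hΔ : L⁻¹ * ⟪g w, Δ⟫ - L⁻¹ * ⟪g z, Δ⟫ = L⁻¹ * ‖Δ‖ ^ 2 := by
    rw [← mul_sub, ← inner_sub_left, real_inner_self_eq_norm_sq]
  rw [show u - z = (w - z) - L⁻¹ • Δ by simp only [u]; abel, inner_sub_right,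
    real_inner_smul_right] at hlower
  rw [show u - w = -(L⁻¹ • Δ) by simp only [u]; abel, inner_neg_right, real_inner_smul_right,
    norm_neg, norm_smul, Real.norm_eq_abs, abs_inv, abs_of_pos hL] at hupper
  have hs : s / 2 * ‖Δ‖ ^ 2 ≤ L⁻¹ / 2 * ‖Δ‖ ^ 2 := by
    gcongr; rwa [one_div] at hsL
  have hcancel : L / 2 * (L⁻¹ * ‖Δ‖) ^ 2 = L⁻¹ / 2 * ‖Δ‖ ^ 2 := by
    field_simp
  linarith

end Smooth

theorem nag_momentum_succ {V : Type*} [AddCommGroup V] [Module ℝ V] {a r s : ℝ}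
    (ha : a + r + 1 ≠ 0) {xs y₀ y₁ y₂ x₁ x₂ g₀ g₁ : V} (hx₁ : x₁ = y₀ - s • g₀)
    (hx₂ : x₂ = y₁ - s • g₁) (hy₂ : y₂ = x₂ + (a / (a + r + 1)) • (x₂ - x₁)) :
    (a + 1) • (y₂ - y₁) + r • (y₂ - xs) + (s * (a + 1)) • g₁ =
      a • (y₁ - y₀) + r • (y₁ - xs) + (s * a) • g₀ - (s * (a + r)) • g₁ := by
  subst hx₁ hx₂ hy₂
  match_scalars <;> field_simp <;> ring

section Energy

variable {E : Type*} [NormedAddCommGroup E] [InnerProductSpace ℝ E]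
  {f : E → ℝ} {g : E → E} {xs : E} {s r a : ℝ}

/-- The Lyapunov energy `E(k)` of the paper, with `a = k`, `y₀ = y_{k-1}` and `y₁ = y_k`;
`√s • v_{k-1} = y₁ - y₀` has been substituted. -/
noncomputable def nagEnergy (f : E → ℝ) (g : E → E) (xs : E) (s r a : ℝ) (y₀ y₁ : E) : ℝ :=
  s * a * (a + r) * (f y₀ - f xs) + 1 / 2 * ‖a • (y₁ - y₀) + r • (y₁ - xs) + (s * a) • g y₀‖ ^ 2

theorem nagEnergy_succ_sub_le (hs : 0 ≤ s) (hr : 0 ≤ r) (ha : 0 ≤ a)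
    (hcoco : ∀ z w, f z + ⟪g z, w - z⟫ + s / 2 * ‖g w - g z‖ ^ 2 ≤ f w) (hg : g xs = 0)
    {y₀ y₁ y₂ x₁ x₂ : E} (hx₁ : x₁ = y₀ - s • g y₀) (hx₂ : x₂ = y₁ - s • g y₁)
    (hy₂ : y₂ = x₂ + (a / (a + r + 1)) • (x₂ - x₁)) :
    nagEnergy f g xs s r (a + 1) y₁ y₂ - nagEnergy f g xs s r a y₀ y₁ ≤
      -(s ^ 2 * a * (a + r) / 2) * ‖g y₀‖ ^ 2 -
        s * ((r - 2) * a + r ^ 2 - r - 1) * (f y₁ - f xs) := by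
  unfold nagEnergy
  rw [nag_momentum_succ (by positivity) hx₁ hx₂ hy₂]
  set W := a • (y₁ - y₀) + r • (y₁ - xs) + (s * a) • g y₀
  set c := s * (a + r)
  have hsq : ‖W - c • g y₁‖ ^ 2 = ‖W‖ ^ 2 - 2 * c * ⟪W, g y₁⟫ + c ^ 2 * ‖g y₁‖ ^ 2 := by
    rw [norm_sub_sq_real, real_inner_smul_right, norm_smul, mul_pow, Real.norm_eq_abs, sq_abs]
    ring
  have hW : ⟪W, g y₁⟫ = a * ⟪y₁ - y₀, g y₁⟫ + r * ⟪y₁ - xs, g y₁⟫ + s * a * ⟪g y₀, g y₁⟫ := by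
    simp only [W, inner_add_left, real_inner_smul_left, mul_assoc]
  have hprev : f y₁ - ⟪y₁ - y₀, g y₁⟫ +
      s / 2 * (‖g y₀‖ ^ 2 - 2 * ⟪g y₀, g y₁⟫ + ‖g y₁‖ ^ 2) ≤ f y₀ := by
    have h := hcoco y₁ y₀
    rwa [← neg_sub y₁ y₀, inner_neg_right, real_inner_comm, norm_sub_sq_real] at h
  have hmin : f y₁ - ⟪y₁ - xs, g y₁⟫ + s / 2 * ‖g y₁‖ ^ 2 ≤ f xs := by
    have h := hcoco y₁ xs
    rwa [← neg_sub y₁ xs, inner_neg_right, real_inner_comm, hg, zero_sub, norm_neg] at h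
  have hca : 0 ≤ c * a := by positivity
  have hcr : 0 ≤ c * r := by positivity
  rw [hsq, hW]
  linarith [mul_le_mul_of_nonneg_left hprev hca, mul_le_mul_of_nonneg_left hmin hcr]

end Energy

theorem stmt_6_general {d : ℕ} (f : EuclideanSpace ℝ (Fin d) → ℝ)
    (g : EuclideanSpace ℝ (Fin d) → EuclideanSpace ℝ (Fin d)) (L : ℝ) (hL : 0 < L)
    (hconv : ConvexOn ℝ Set.univ f)
    (hgrad : ∀ z, HasGradientAt f (g z) z)
    (hlip : ∀ z w, ‖g z - g w‖ ≤ L * ‖z - w‖)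
    (xs : EuclideanSpace ℝ (Fin d)) (hmin : ∀ z, f xs ≤ f z)
    (s r : ℝ) (hs : 0 < s) (hsL : s ≤ 1 / L) (hr : 2 ≤ r)
    (x y : ℕ → EuclideanSpace ℝ (Fin d))
    (hx : ∀ k : ℕ, x (k + 1) = y k - s • g (y k))
    (hy : ∀ k : ℕ, y (k + 1) = x (k + 1) + (((k : ℝ)) / ((k : ℝ) + r + 1)) • (x (k + 1) - x k))
    (v : ℕ → EuclideanSpace ℝ (Fin d))
    (hv : ∀ k : ℕ, v k = (Real.sqrt s)⁻¹ • (y (k + 1) - y k)) :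
    ∀ k : ℕ,
      (s * ((k : ℝ) + 2) * ((k : ℝ) + 2 + r) * (f (y (k + 1)) - f xs) +
          (1 / 2) * ‖(Real.sqrt s * ((k : ℝ) + 2)) • v (k + 1) + r • (y (k + 2) - xs) +
              (s * ((k : ℝ) + 2)) • g (y (k + 1))‖ ^ 2) -
        (s * ((k : ℝ) + 1) * ((k : ℝ) + 1 + r) * (f (y k) - f xs) +
          (1 / 2) * ‖(Real.sqrt s * ((k : ℝ) + 1)) • v k + r • (y (k + 1) - xs) +
              (s * ((k : ℝ) + 1)) • g (y k)‖ ^ 2) ≤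
      -(s ^ 2 * ((k : ℝ) + 1) * ((k : ℝ) + 1 + r) / 2) * ‖g (y k)‖ ^ 2 -
        s * ((r - 2) * ((k : ℝ) + 1) + r ^ 2 - r - 1) * (f (y (k + 1)) - f xs) := by
  intro k
  have hsv : ∀ (c : ℝ) (j : ℕ), (√s * c) • v j = c • (y (j + 1) - y j) := fun c j ↦ by
    rw [hv, smul_smul, mul_right_comm, mul_inv_cancel₀ (Real.sqrt_pos.mpr hs).ne', one_mul]
  have hcoco := hconv.add_inner_add_sq_le hL hsL hgrad hlip
  have hg : g xs = 0 := IsLocalMin.hasGradientAt_eq_zero (.of_forall hmin) (hgrad xs)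
  have hy' : y (k + 2) =
      x (k + 2) + (((k : ℝ) + 1) / ((k + 1) + r + 1)) • (x (k + 2) - x (k + 1)) := by
    simpa using hy (k + 1)
  rw [hsv, hsv, show (k : ℝ) + 2 = (k + 1) + 1 by ring]
  exact nagEnergy_succ_sub_le hs.le (by linarith) (by positivity) hcoco hg (hx k) (hx (k + 1)) hy'

theorem stmt_6 {d : ℕ} (f : EuclideanSpace ℝ (Fin d) → ℝ)
    (g : EuclideanSpace ℝ (Fin d) → EuclideanSpace ℝ (Fin d)) (L : ℝ) (hL : 0 < L)
    (hconv : ConvexOn ℝ Set.univ f)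
    (hgrad : ∀ z, HasGradientAt f (g z) z)
    (hlip : ∀ z w, ‖g z - g w‖ ≤ L * ‖z - w‖)
    (xs : EuclideanSpace ℝ (Fin d)) (hmin : ∀ z, f xs ≤ f z)
    (s r : ℝ) (hs : 0 < s) (hsL : s ≤ 1 / L) (hr : 2 ≤ r)
    (x y : ℕ → EuclideanSpace ℝ (Fin d))
    (hx0 : x 0 = y 0)
    (hx : ∀ k : ℕ, x (k + 1) = y k - s • g (y k))
    (hy : ∀ k : ℕ, y (k + 1) = x (k + 1) + (((k : ℝ)) / ((k : ℝ) + r + 1)) • (x (k + 1) - x k))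
    (v : ℕ → EuclideanSpace ℝ (Fin d))
    (hv : ∀ k : ℕ, v k = (Real.sqrt s)⁻¹ • (y (k + 1) - y k)) :
    ∀ k : ℕ,
      (s * ((k : ℝ) + 2) * ((k : ℝ) + 2 + r) * (f (y (k + 1)) - f xs) +
          (1 / 2) * ‖(Real.sqrt s * ((k : ℝ) + 2)) • v (k + 1) + r • (y (k + 2) - xs) +
              (s * ((k : ℝ) + 2)) • g (y (k + 1))‖ ^ 2) -
        (s * ((k : ℝ) + 1) * ((k : ℝ) + 1 + r) * (f (y k) - f xs) +
          (1 / 2) * ‖(Real.sqrt s * ((k : ℝ) + 1)) • v k + r • (y (k + 1) - xs) +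
              (s * ((k : ℝ) + 1)) • g (y k)‖ ^ 2) ≤
      -(s ^ 2 * ((k : ℝ) + 1) * ((k : ℝ) + 1 + r) / 2) * ‖g (y k)‖ ^ 2 -
        s * ((r - 2) * ((k : ℝ) + 1) + r ^ 2 - r - 1) * (f (y (k + 1)) - f xs) :=
  stmt_6_general f g L hL hconv hgrad hlip xs hmin s r hs hsL hr x y hx hy v hv
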